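/- For every z = (y, h) ∈ Δ_ℐ^free × Γ and every g ∈ Γ: ‖g·ω(z) − ω(gz)‖₁ ≤ |g|_Γ·|supp(y)| and ‖ω(z) − ω(zg)‖₁ ≤ |g|_Γ·|supp(y)|, where gz := (g·y, gh), zg := (y, hg), and for a finitely supported function φ on ℐ, g·φ denotes the pushforward (g·φ)(j) = φ(g⁻¹·j). -/
import Mathlib

noncomputable section

/-- The ℓ¹-norm of a finitely supported real-valued function. -/
def l1Norm {X : Type*} (φ : X →₀ ℝ) : ℝ := ∑ x ∈ φ.support, |φ x|

variable {ι Δ Γ : Type*} [Group Δ] [Group Γ] [MulAction Γ ι]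
  [DecidableEq ι] [DecidableEq Δ]

/-- The action of `Γ` on the free product `∗_{i∈ι} Δ` permuting the factors. -/
def permHom (g : Γ) :
    Monoid.CoprodI (fun _ : ι => Δ) →* Monoid.CoprodI (fun _ : ι => Δ) :=
  Monoid.CoprodI.lift fun i => Monoid.CoprodI.of (M := fun _ : ι => Δ) (i := g • i)

/-- The reduced word of an element of the free product, as a list of letters. -/
def wordList (y : Monoid.CoprodI (fun _ : ι => Δ)) : List (Σ _ : ι, Δ) :=
  (Monoid.CoprodI.Word.equiv y).toList

/-- The support `supp(y) ⊆ ι` of an element of the free product. -/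
def freeSupp (y : Monoid.CoprodI (fun _ : ι => Δ)) : Finset ι :=
  ((wordList y).map Sigma.fst).toFinset

/-- `a(y) := Σₖ |y_{iₖ}|_Δ·δ_{iₖ}`. -/
def aFn (nD : Δ → ℝ) (y : Monoid.CoprodI (fun _ : ι => Δ)) : ι →₀ ℝ :=
  ((wordList y).map fun p => Finsupp.single p.1 (nD p.2)).sum

/-- `m(y, g) := Σ_{i ∈ supp(y)} min{|i|_ι, |g⁻¹·i|_ι}·δ_i`. -/
def mFn (nI : ι → ℝ) (y : Monoid.CoprodI (fun _ : ι => Δ)) (g : Γ) : ι →₀ ℝ :=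
  ∑ i ∈ freeSupp y, Finsupp.single i (min (nI i) (nI (g⁻¹ • i)))

/-- `ω(y, g) := m(y, g) + a(y)`. -/
def omegaFree (nI : ι → ℝ) (nD : Δ → ℝ)
    (y : Monoid.CoprodI (fun _ : ι => Δ)) (g : Γ) : ι →₀ ℝ :=
  mFn nI y g + aFn nD y

/-! ### Auxiliary lemmas -/

set_option linter.unusedSectionVars false

lemma l1Norm_eq_sum' {X : Type*} {φ : X →₀ ℝ} {s : Finset X} (hs : φ.support ⊆ s) :
    l1Norm φ = ∑ x ∈ s, |φ x| := by
  refine Finset.sum_subset hs fun x _ hx => ?_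
  simp [Finsupp.notMem_support_iff.mp hx]

lemma l1Norm_add_le' {X : Type*} (φ ψ : X →₀ ℝ) :
    l1Norm (φ + ψ) ≤ l1Norm φ + l1Norm ψ := by
  classical
  rw [l1Norm_eq_sum' (s := φ.support ∪ ψ.support) (Finsupp.support_add),
    l1Norm_eq_sum' (s := φ.support ∪ ψ.support) Finset.subset_union_left,
    l1Norm_eq_sum' (s := φ.support ∪ ψ.support) Finset.subset_union_right,
    ← Finset.sum_add_distrib]
  exact Finset.sum_le_sum fun x _ => by simpa using abs_add_le (φ x) (ψ x)

lemma l1Norm_sum_le' {X A : Type*} (s : Finset A) (φ : A → (X →₀ ℝ)) :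
    l1Norm (∑ a ∈ s, φ a) ≤ ∑ a ∈ s, l1Norm (φ a) := by
  classical
  induction s using Finset.cons_induction with
  | empty => simp [l1Norm]
  | cons a s ha ih =>
    rw [Finset.sum_cons, Finset.sum_cons]
    exact (l1Norm_add_le' _ _).trans (by linarith)

lemma l1Norm_single_le' {X : Type*} [DecidableEq X] (x : X) (c : ℝ) :
    l1Norm (Finsupp.single x c) ≤ |c| := by
  rw [l1Norm_eq_sum' (s := {x}) Finsupp.support_single_subset]
  simp

/-- Reindexing a reduced word along the action of `g`. -/
def wordMap (g : Γ) (w : Monoid.CoprodI.Word (fun _ : ι => Δ)) :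
    Monoid.CoprodI.Word (fun _ : ι => Δ) where
  toList := w.toList.map fun p => ⟨g • p.1, p.2⟩
  ne_one := by
    intro l hl
    rcases List.mem_map.mp hl with ⟨p, hp, rfl⟩
    exact w.ne_one p hp
  chain_ne := by
    rw [List.isChain_map]
    exact w.chain_ne.imp fun {a b} hab h => hab ((MulAction.injective g) h)

lemma prod_wordMap (g : Γ) (w : Monoid.CoprodI.Word (fun _ : ι => Δ)) :
    (wordMap g w).prod = permHom g w.prod := by
  rw [Monoid.CoprodI.Word.prod, Monoid.CoprodI.Word.prod, map_list_prod, wordMap]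
  simp only [List.map_map]
  rfl

lemma wordList_permHom (g : Γ) (y : Monoid.CoprodI (fun _ : ι => Δ)) :
    wordList (permHom g y) = (wordList y).map fun p => ⟨g • p.1, p.2⟩ := by
  have : Monoid.CoprodI.Word.equiv (permHom g y) =
      wordMap g (Monoid.CoprodI.Word.equiv y) := by
    apply (Monoid.CoprodI.Word.equiv (M := fun _ : ι => Δ)).symm.injective
    show (Monoid.CoprodI.Word.equiv (M := fun _ : ι => Δ)).symm _ =
      (Monoid.CoprodI.Word.equiv (M := fun _ : ι => Δ)).symm _
    rw [Equiv.symm_apply_apply]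
    show _ = (wordMap g (Monoid.CoprodI.Word.equiv y)).prod
    rw [prod_wordMap]
    congr 1
    exact ((Monoid.CoprodI.Word.equiv (M := fun _ : ι => Δ)).symm_apply_apply y).symm
  rw [wordList, this]; rfl

lemma freeSupp_permHom (g : Γ) (y : Monoid.CoprodI (fun _ : ι => Δ)) :
    freeSupp (permHom g y) = (freeSupp y).image (fun i => g • i) := by
  ext j
  simp only [freeSupp, wordList_permHom, List.map_map, Function.comp_def,
    List.mem_toFinset, List.mem_map, Finset.mem_image]
  aesop

lemma aFn_permHom (nD : Δ → ℝ) (g : Γ) (y : Monoid.CoprodI (fun _ : ι => Δ)) :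
    Finsupp.mapDomain (fun i => g • i) (aFn nD y) = aFn nD (permHom g y) := by
  rw [aFn, aFn, wordList_permHom, List.map_map]
  rw [show Finsupp.mapDomain (M := ℝ) (fun i : ι => g • i) =
    Finsupp.mapDomain.addMonoidHom (fun i : ι => g • i) from rfl, map_list_sum]
  rw [List.map_map]
  congr 1
  ext p
  simp [Finsupp.mapDomain.addMonoidHom_apply, Finsupp.mapDomain_single, Function.comp]

lemma card_freeSupp_permHom (g : Γ) (y : Monoid.CoprodI (fun _ : ι => Δ)) :
    (freeSupp (permHom g y)).card = (freeSupp y).card := by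
  rw [freeSupp_permHom]
  exact Finset.card_image_of_injective _ (MulAction.injective g)

/-- `‖g·ω(z) − ω(gz)‖₁ ≤ |g|_Γ·|supp(y)|` and `‖ω(z) − ω(zg)‖₁ ≤ |g|_Γ·|supp(y)|`
for `z = (y, h) ∈ Δ_ι^free ⋊ Γ`. -/
theorem omegaFree_translation_estimates (nI : ι → ℝ) (nG : Γ → ℝ) (nD : Δ → ℝ)
    (hI0 : ∀ i, 0 ≤ nI i) (hG0 : ∀ g, 0 ≤ nG g)
    (hcompat : ∀ (g : Γ) (i : ι), nI (g • i) ≤ nG g + nI i)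
    (hsymm : ∀ g : Γ, nG g⁻¹ = nG g)
    (hDe : nD 1 = 0) (hD1 : ∀ d : Δ, d ≠ 1 → 1 ≤ nD d)
    (y : Monoid.CoprodI (fun _ : ι => Δ)) (h g : Γ) :
    l1Norm (Finsupp.mapDomain (fun i => g • i) (omegaFree nI nD y h) -
        omegaFree nI nD (permHom g y) (g * h)) ≤ nG g * (freeSupp y).card ∧
    l1Norm (omegaFree nI nD y h - omegaFree nI nD y (h * g)) ≤
        nG g * (freeSupp y).card := by
  classical
  have key : ∀ (g : Γ) (i : ι), |nI i - nI (g • i)| ≤ nG g := by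
    intro g i
    rw [abs_sub_le_iff]
    constructor
    · have := hcompat g⁻¹ (g • i)
      rw [inv_smul_smul, hsymm] at this
      linarith
    · have := hcompat g i
      linarith
  constructor
  · -- first estimate
    have hω : Finsupp.mapDomain (fun i => g • i) (omegaFree nI nD y h) -
        omegaFree nI nD (permHom g y) (g * h) =
        ∑ i ∈ freeSupp y, Finsupp.single (g • i)
          (min (nI i) (nI (h⁻¹ • i)) - min (nI (g • i)) (nI (h⁻¹ • i))) := by
      rw [omegaFree, omegaFree, Finsupp.mapDomain_add, aFn_permHom]
      have hm1 : Finsupp.mapDomain (fun i => g • i) (mFn nI y h) =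
          ∑ i ∈ freeSupp y, Finsupp.single (g • i) (min (nI i) (nI (h⁻¹ • i))) := by
        rw [mFn, Finsupp.mapDomain_finset_sum]
        exact Finset.sum_congr rfl fun i _ => Finsupp.mapDomain_single
      have hm2 : mFn nI (permHom g y) (g * h) =
          ∑ i ∈ freeSupp y, Finsupp.single (g • i)
            (min (nI (g • i)) (nI (h⁻¹ • i))) := by
        rw [mFn, freeSupp_permHom,
          Finset.sum_image (fun a _ b _ hab => MulAction.injective g hab)]
        refine Finset.sum_congr rfl fun i _ => ?_
        congr 2
        rw [mul_inv_rev, mul_smul, inv_smul_smul]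
      rw [hm1, hm2, add_sub_add_right_eq_sub, ← Finset.sum_sub_distrib]
      refine Finset.sum_congr rfl fun i _ => ?_
      rw [Finsupp.single_sub]
    rw [hω]
    calc l1Norm (∑ i ∈ freeSupp y, Finsupp.single (g • i)
          (min (nI i) (nI (h⁻¹ • i)) - min (nI (g • i)) (nI (h⁻¹ • i))))
        ≤ ∑ i ∈ freeSupp y, l1Norm (Finsupp.single (g • i)
          (min (nI i) (nI (h⁻¹ • i)) - min (nI (g • i)) (nI (h⁻¹ • i)))) :=
          l1Norm_sum_le' _ _
      _ ≤ ∑ i ∈ freeSupp y, nG g := by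
          refine Finset.sum_le_sum fun i _ => (l1Norm_single_le' _ _).trans ?_
          refine (abs_min_sub_min_le_max _ _ _ _).trans ?_
          rw [sub_self, abs_zero]
          exact max_le (key g i) (hG0 g)
      _ = nG g * (freeSupp y).card := by rw [Finset.sum_const, nsmul_eq_mul, mul_comm]
  · -- second estimate
    have hω : omegaFree nI nD y h - omegaFree nI nD y (h * g) =
        ∑ i ∈ freeSupp y, Finsupp.single i
          (min (nI i) (nI (h⁻¹ • i)) - min (nI i) (nI (g⁻¹ • h⁻¹ • i))) := by
      rw [omegaFree, omegaFree]
      have : mFn nI y (h * g) =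
          ∑ i ∈ freeSupp y, Finsupp.single i (min (nI i) (nI (g⁻¹ • h⁻¹ • i))) := by
        rw [mFn]
        refine Finset.sum_congr rfl fun i _ => ?_
        rw [mul_inv_rev, mul_smul]
      rw [this, mFn, add_sub_add_right_eq_sub, ← Finset.sum_sub_distrib]
      refine Finset.sum_congr rfl fun i _ => ?_
      rw [Finsupp.single_sub]
    rw [hω]
    calc l1Norm (∑ i ∈ freeSupp y, Finsupp.single i
          (min (nI i) (nI (h⁻¹ • i)) - min (nI i) (nI (g⁻¹ • h⁻¹ • i))))
        ≤ ∑ i ∈ freeSupp y, l1Norm (Finsupp.single i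
          (min (nI i) (nI (h⁻¹ • i)) - min (nI i) (nI (g⁻¹ • h⁻¹ • i)))) :=
          l1Norm_sum_le' _ _
      _ ≤ ∑ i ∈ freeSupp y, nG g := by
          refine Finset.sum_le_sum fun i _ => (l1Norm_single_le' _ _).trans ?_
          refine (abs_min_sub_min_le_max _ _ _ _).trans ?_
          rw [sub_self, abs_zero]
          refine max_le (hG0 g) ?_
          have := key g⁻¹ (h⁻¹ • i)
          rwa [hsymm] at this
      _ = nG g * (freeSupp y).card := by rw [Finset.sum_const, nsmul_eq_mul, mul_comm]
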